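/- Let Y = F_2[R_{ij} : 0 ≤ i < j, (i,j) ≠ (n, n+1)] with maps δ_1 and δ_2 defined on generators by: δ_1(R_{ij}) = Σ_{i<k<j} R_{ik}R_{kj} if i ≠ n and j ≠ n+1; δ_1(R_{i,n+1}) = Σ_{i<k<n} R_{ik}R_{k,n+1} and δ_2(R_{i,n+1}) = R_{in} for i < n; δ_1(R_{nj}) = Σ_{n+1<k<j} R_{nk}R_{kj} and δ_2(R_{nj}) = R_{n+1,j} for j > n+1; with δ_2 vanishing on other generators, and both extended as derivations. Then d_Y := δ_1 + δ_2 satisfies d_Y² = 0, and under the identification X = Y[R_{n,n+1}], the differential of X equals δ_1 + R_{n,n+1}·δ_2 on Y. -/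

import Mathlib

set_option synthInstance.maxHeartbeats 1000000
set_option maxHeartbeats 1000000

open MvPolynomial Finset

/-- Index type for the generators `R_{ij}`, `0 ≤ i < j`. -/
abbrev SigmaX : Type := {p : ℕ × ℕ // p.1 < p.2}

/-- The polynomial algebra `X = F₂[R_{ij} : 0 ≤ i < j]`. -/
abbrev Xalg : Type := MvPolynomial SigmaX (ZMod 2)

/-- The generator `R_{ij}` of `X` (with the convention `R_{ij} = 0` when `i ≥ j`). -/
noncomputable def Rgen (i j : ℕ) : Xalg :=
  if h : i < j then X ⟨(i, j), h⟩ else 0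

/-- The differential of `X`, determined on generators by
`d R_{ij} = ∑_{i<k<j} R_{ik} R_{kj}` and extended as an `F₂`-linear derivation. -/
noncomputable def dX : Derivation (ZMod 2) Xalg Xalg :=
  mkDerivation (ZMod 2)
    (fun p : SigmaX => ∑ k ∈ Finset.Ioo p.1.1 p.1.2, Rgen p.1.1 k * Rgen k p.1.2)

/-- Index type for the generators of `Y`: all `R_{ij}` with `0 ≤ i < j` except `R_{n,n+1}`. -/
abbrev SigmaY (n : ℕ) : Type := {p : SigmaX // p.1 ≠ (n, n + 1)}

/-- `Y = F₂[R_{ij} : 0 ≤ i < j, (i,j) ≠ (n,n+1)]`. -/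
abbrev Yalg (n : ℕ) : Type := MvPolynomial (SigmaY n) (ZMod 2)

/-- The generator `R_{ij}` of `Y` (zero when `i ≥ j` or `(i,j) = (n,n+1)`). -/
noncomputable def RgenY (n i j : ℕ) : Yalg n :=
  if h : i < j ∧ (i, j) ≠ (n, n + 1) then X ⟨⟨(i, j), h.1⟩, h.2⟩ else 0

/-- The value of `δ₁` on the generator `R_{ij}` of `Y`. -/
noncomputable def delta1Gen (n : ℕ) (p : SigmaY n) : Yalg n :=
  let i := p.1.1.1
  let j := p.1.1.2
  if j = n + 1 then ∑ k ∈ Finset.Ioo i n, RgenY n i k * RgenY n k (n + 1)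
  else if i = n then ∑ k ∈ Finset.Ioo (n + 1) j, RgenY n n k * RgenY n k j
  else ∑ k ∈ Finset.Ioo i j, RgenY n i k * RgenY n k j

/-- The value of `δ₂` on the generator `R_{ij}` of `Y`. -/
noncomputable def delta2Gen (n : ℕ) (p : SigmaY n) : Yalg n :=
  let i := p.1.1.1
  let j := p.1.1.2
  if j = n + 1 then RgenY n i n
  else if i = n then RgenY n (n + 1) j
  else 0

/-- The derivation `δ₁` of `Y`. -/
noncomputable def delta1 (n : ℕ) : Derivation (ZMod 2) (Yalg n) (Yalg n) :=
  mkDerivation (ZMod 2) (delta1Gen n)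

/-- The derivation `δ₂` of `Y`. -/
noncomputable def delta2 (n : ℕ) : Derivation (ZMod 2) (Yalg n) (Yalg n) :=
  mkDerivation (ZMod 2) (delta2Gen n)

/-- The inclusion `Y → X` (so that `X = Y[R_{n,n+1}]`). -/
noncomputable def inclY (n : ℕ) : Yalg n →ₐ[ZMod 2] Xalg :=
  rename (fun q : SigmaY n => q.1)

/-!
`d_X R_{ij}` contains `R_{n,n+1}` only through the summand `k = n` (when `j = n + 1`) or
`k = n + 1` (when `i = n`), which is exactly `R_{n,n+1} · δ₂ R_{ij}`; since both sides of
`d_X = δ₁ + R_{n,n+1} δ₂` satisfy the Leibniz rule along `Y ⊆ X`, agreement on generators suffices.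
In characteristic two `d_X ∘ d_X` is a derivation, and it kills every generator because both
halves of `d_X² R_{ij}` equal `∑_{i<l<k<j} R_{il} R_{lk} R_{kj}`; hence `d_X² = 0`.
As `d_X R_{n,n+1} = 0`, applying `d_X` to the decomposition gives
`0 = δ₁² + R_{n,n+1} (δ₁δ₂ + δ₂δ₁) + R_{n,n+1}² δ₂²` on `Y`. Because `X = Y[R_{n,n+1}]` is a
polynomial ring, the three coefficients vanish, and their sum is `d_Y²`.
-/

namespace Derivation

variable {R A : Type*} [CommSemiring R] [CommRing A] [Algebra R A] [CharP A 2]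

def compSelfOfCharTwo (D : Derivation R A A) : Derivation R A A where
  toLinearMap := D.toLinearMap ∘ₗ D.toLinearMap
  map_one_eq_zero' := by simp
  leibniz' a b := by
    change D (D (a * b)) = a • D (D b) + b • D (D a)
    simp only [leibniz, map_add, smul_eq_mul]
    linear_combination CharTwo.add_self_eq_zero (D a * D b)

@[simp]
lemma compSelfOfCharTwo_apply (D : Derivation R A A) (a : A) :
    D.compSelfOfCharTwo a = D (D a) := rfl

end Derivation

namespace MvPolynomial

variable {R σ : Type*}

lemma derivation_comp_self_eq_zero [CommRing R] [CharP R 2]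
    (D : Derivation R (MvPolynomial σ R) (MvPolynomial σ R)) (h : ∀ i, D (D (X i)) = 0)
    (p : MvPolynomial σ R) : D (D p) = 0 := by
  have hsq : D.compSelfOfCharTwo = 0 := derivation_ext h
  simpa using DFunLike.congr_fun hsq p

lemma derivation_algHom_eq_of_X [CommSemiring R] {B : Type*} [CommSemiring B] [Algebra R B]
    (f : MvPolynomial σ R →ₐ[R] B) (D : Derivation R B B)
    (δ₁ δ₂ : Derivation R (MvPolynomial σ R) (MvPolynomial σ R)) (t : B)
    (h : ∀ i, D (f (X i)) = f (δ₁ (X i)) + t * f (δ₂ (X i))) (p : MvPolynomial σ R) :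
    D (f p) = f (δ₁ p) + t * f (δ₂ p) := by
  induction p using MvPolynomial.induction_on with
  | C a => simp
  | add p q hp hq => simp only [map_add, hp, hq]; ring
  | mul_X p i hp =>
    simp only [map_mul, Derivation.leibniz, smul_eq_mul, map_add, hp, h]
    ring

end MvPolynomial

lemma Finset.sum_Ioo_sum_Ioo_comm {α M : Type*} [Preorder α] [LocallyFiniteOrder α]
    [AddCommMonoid M] (i j : α) (f : α → α → M) :
    ∑ k ∈ Ioo i j, ∑ l ∈ Ioo i k, f l k = ∑ l ∈ Ioo i j, ∑ k ∈ Ioo l j, f l k :=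
  Finset.sum_comm' fun k l => by
    simp only [mem_Ioo]
    exact ⟨fun ⟨⟨_, hkj⟩, hil, hlk⟩ => ⟨⟨hlk, hkj⟩, hil, hlk.trans hkj⟩,
      fun ⟨⟨hlk, hkj⟩, hil, _⟩ => ⟨⟨hil.trans hlk, hkj⟩, hil, hlk⟩⟩

lemma dX_Rgen (i j : ℕ) : dX (Rgen i j) = ∑ k ∈ Ioo i j, Rgen i k * Rgen k j := by
  by_cases h : i < j
  · rw [Rgen, dif_pos h, dX, mkDerivation_X]
  · rw [Rgen, dif_neg h, map_zero, Ioo_eq_empty h, sum_empty]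

lemma dX_Rgen_self_succ (n : ℕ) : dX (Rgen n (n + 1)) = 0 := by
  rw [dX_Rgen, Ioo_add_one_right_eq_Ioc, Ioc_self, sum_empty]

lemma dX_dX_Rgen (i j : ℕ) : dX (dX (Rgen i j)) = 0 :=
  calc dX (dX (Rgen i j))
      = ∑ k ∈ Ioo i j, ∑ l ∈ Ioo k j, Rgen i k * Rgen k l * Rgen l j
        + ∑ k ∈ Ioo i j, ∑ l ∈ Ioo i k, Rgen i l * Rgen l k * Rgen k j := by
        simp only [dX_Rgen, map_sum, Derivation.leibniz, smul_eq_mul, mul_sum, sum_add_distrib]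
        congr 1 <;> exact sum_congr rfl fun _ _ => sum_congr rfl fun _ _ => by ring
    _ = 0 := by
        rw [sum_Ioo_sum_Ioo_comm]
        exact CharTwo.add_self_eq_zero _

lemma dX_dX (x : Xalg) : dX (dX x) = 0 :=
  derivation_comp_self_eq_zero dX (fun p => by simpa [Rgen, p.2] using dX_dX_Rgen p.1.1 p.1.2) x



lemma inclY_RgenY (n i j : ℕ) (h : (i, j) ≠ (n, n + 1)) : inclY n (RgenY n i j) = Rgen i j := by
  by_cases hij : i < j
  · rw [RgenY, dif_pos ⟨hij, h⟩, Rgen, dif_pos hij, inclY, rename_X]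
  · rw [RgenY, dif_neg fun h' => hij h'.1, Rgen, dif_neg hij, map_zero]

lemma inclY_sum_RgenY_mul (n i j : ℕ) (s : Finset ℕ)
    (h : ∀ k ∈ s, (i, k) ≠ (n, n + 1) ∧ (k, j) ≠ (n, n + 1)) :
    inclY n (∑ k ∈ s, RgenY n i k * RgenY n k j) = ∑ k ∈ s, Rgen i k * Rgen k j := by
  rw [map_sum]
  refine sum_congr rfl fun k hk => ?_
  rw [map_mul, inclY_RgenY n i k (h k hk).1, inclY_RgenY n k j (h k hk).2]

lemma dX_inclY_X (n : ℕ) (p : SigmaY n) :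
    dX (inclY n (X p)) = inclY n (delta1Gen n p) + Rgen n (n + 1) * inclY n (delta2Gen n p) := by
  obtain ⟨⟨⟨i, j⟩, hij⟩, hne⟩ := p
  have hX : inclY n (X ⟨⟨(i, j), hij⟩, hne⟩) = Rgen i j := by
    rw [inclY, rename_X, Rgen, dif_pos hij]
  rw [hX, dX_Rgen]
  by_cases hj : j = n + 1
  · subst hj
    have hin : i < n := by
      simp only [ne_eq, Prod.mk.injEq, and_true] at hne hij
      omega
    simp only [delta1Gen, delta2Gen, if_true]
    rw [Ioo_add_one_right_eq_Ioc, ← Ioo_insert_right hin, sum_insert (by simp),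
      inclY_RgenY n i n (by simp [hin.ne]), inclY_sum_RgenY_mul]
    · ring
    · intro k hk
      simp only [mem_Ioo] at hk
      simp only [ne_eq, Prod.mk.injEq]
      omega
  by_cases hi : i = n
  · subst hi
    have hj' : i + 1 < j := by simp at hij; omega
    simp only [delta1Gen, delta2Gen, hj, if_true, if_false]
    rw [← Ico_add_one_left_eq_Ioo, ← Ioo_insert_left hj', sum_insert (by simp),
      inclY_RgenY i (i + 1) j (by simp [hj]), inclY_sum_RgenY_mul]
    · ring
    · intro k hk
      simp only [mem_Ioo] at hk
      simp only [ne_eq, Prod.mk.injEq]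
      omega
  · simp only [delta1Gen, delta2Gen, hj, hi, if_false, map_zero, mul_zero, add_zero]
    rw [inclY_sum_RgenY_mul]
    intro k _
    simp [hi, hj]

lemma dX_inclY (n : ℕ) (y : Yalg n) :
    dX (inclY n y) = inclY n (delta1 n y) + Rgen n (n + 1) * inclY n (delta2 n y) :=
  derivation_algHom_eq_of_X (inclY n) dX (delta1 n) (delta2 n) _
    (fun p => by rw [delta1, delta2, mkDerivation_X, mkDerivation_X, dX_inclY_X]) y

def optionSigmaYEquiv (n : ℕ) : Option (SigmaY n) ≃ SigmaX :=
  (Equiv.optionCongr (Equiv.subtypeEquivRight fun _ => Subtype.ext_iff.not.symm)).trans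
    (Equiv.optionSubtypeNe (⟨(n, n + 1), n.lt_succ_self⟩ : SigmaX))

noncomputable def xAlgEquivPolynomial (n : ℕ) : Xalg ≃ₐ[ZMod 2] Polynomial (Yalg n) :=
  (renameEquiv (ZMod 2) (optionSigmaYEquiv n).symm).trans (optionEquivLeft (ZMod 2) (SigmaY n))

lemma xAlgEquivPolynomial_inclY (n : ℕ) (y : Yalg n) :
    xAlgEquivPolynomial n (inclY n y) = Polynomial.C y := by
  suffices h : (xAlgEquivPolynomial n : Xalg →ₐ[ZMod 2] _).comp (inclY n) =
      Polynomial.CAlgHom.comp (AlgHom.id (ZMod 2) (Yalg n)) from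
    DFunLike.congr_fun h y
  refine algHom_ext fun q => ?_
  have hq : (optionSigmaYEquiv n).symm q.1 = some q :=
    (Equiv.symm_apply_eq _).2 rfl
  simp [xAlgEquivPolynomial, inclY, hq, optionEquivLeft_X_some]

lemma xAlgEquivPolynomial_Rgen (n : ℕ) :
    xAlgEquivPolynomial n (Rgen n (n + 1)) = Polynomial.X := by
  have h : (optionSigmaYEquiv n).symm ⟨(n, n + 1), n.lt_succ_self⟩ = none :=
    (Equiv.symm_apply_eq _).2 rfl
  simp [xAlgEquivPolynomial, Rgen, h, optionEquivLeft_X_none]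

lemma eq_zero_of_inclY_add_Rgen_mul_add_Rgen_sq_mul (n : ℕ) (a b c : Yalg n)
    (h : inclY n a + Rgen n (n + 1) * inclY n b + Rgen n (n + 1) ^ 2 * inclY n c = 0) :
    a = 0 ∧ b = 0 ∧ c = 0 := by
  have hpoly := congrArg (xAlgEquivPolynomial n) h
  simp only [map_add, map_mul, map_pow, xAlgEquivPolynomial_inclY, xAlgEquivPolynomial_Rgen,
    map_zero] at hpoly
  refine ⟨?_, ?_, ?_⟩
  · simpa using congrArg (Polynomial.coeff · 0) hpoly
  · simpa using congrArg (Polynomial.coeff · 1) hpoly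
  · simpa using congrArg (Polynomial.coeff · 2) hpoly

/-- `d_Y = δ₁ + δ₂` squares to zero, and under the identification `X = Y[R_{n,n+1}]` the
differential of `X` equals `δ₁ + R_{n,n+1} · δ₂` on `Y`. -/
theorem dY_squared_and_dX_decomposition (n : ℕ) :
    (∀ y : Yalg n, (delta1 n + delta2 n) ((delta1 n + delta2 n) y) = 0) ∧
    (∀ y : Yalg n,
      dX (inclY n y) = inclY n (delta1 n y) + Rgen n (n + 1) * inclY n (delta2 n y)) := by
  refine ⟨fun y => ?_, dX_inclY n⟩
  have hsq := dX_dX (inclY n y)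
  rw [dX_inclY, map_add, Derivation.leibniz, dX_Rgen_self_succ, smul_zero, add_zero, smul_eq_mul,
    dX_inclY, dX_inclY] at hsq
  obtain ⟨h₁₁, h₁₂, h₂₂⟩ := eq_zero_of_inclY_add_Rgen_mul_add_Rgen_sq_mul n
    (delta1 n (delta1 n y)) (delta2 n (delta1 n y) + delta1 n (delta2 n y))
    (delta2 n (delta2 n y)) (by rw [map_add]; linear_combination hsq)
  simp only [Derivation.add_apply, map_add]
  linear_combination h₁₁ + h₁₂ + h₂₂
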